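/- Let g be the 4-dimensional solvable real Lie algebra with basis e_1,…,e_4 and nonzero brackets [e_1,e_3] = −e_4 and [e_3,e_4] = −e_4, and let K be the endomorphism equal to +id on g⁺ := span(e_1, e_2) and −id on g⁻ := span(e_3, e_4). Then: (i) g is not unimodular (trace(ad e_3) = −1 ≠ 0); (ii) g = g⁺ ⊕ g⁻ is a linear D-complex structure with g⁺ abelian and g⁻ non-abelian; (iii) K is linear C∞-full at the 2nd stage, with H^2(g;ℝ) = span([e^1∧e^2], [e^3∧e^4], [e^2∧e^3]) where [e^1∧e^2], [e^3∧e^4] ∈ H^{2+}_K(g;ℝ) and [e^2∧e^3] ∈ H^{2−}_K(g;ℝ); (iv) K is not linear C∞-pure at the 2nd stage, since e^3∧e^4 − d(e^4) = −e^1∧e^3 shows 0 ≠ [e^3∧e^4] ∈ H^{2+}_K(g;ℝ) ∩ H^{2−}_K(g;ℝ). In particular, abelianity of only one eigen-subalgebra does not suffice for linear C∞-pure-ness at the 2nd stage. -/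

import Mathlib

open scoped BigOperators

noncomputable section ChevalleyEilenberg

variable (g : Type*) [LieRing g] [LieAlgebra ℝ g]

/-- The Chevalley–Eilenberg differential of an alternating `k`-form on a real Lie
algebra, as a function on `(k+1)`-tuples:
`(dα)(x_0,…,x_k) = Σ_{i<j} (−1)^{i+j} α([x_i,x_j], x_0,…,x̂_i,…,x̂_j,…,x_k)`. -/
def ceD : {k : ℕ} → AlternatingMap ℝ g ℝ (Fin k) → ((Fin (k + 1) → g) → ℝ)
  | 0, _ => 0
  | (k + 1), α => fun x =>
      ∑ i : Fin (k + 2), ∑ j : Fin (k + 2),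
        if hij : (i : ℕ) < (j : ℕ) then
          (-1 : ℝ) ^ ((i : ℕ) + (j : ℕ)) *
            α (fun m : Fin (k + 1) =>
                if hm : (m : ℕ) = 0 then ⁅x i, x j⁆
                else
                  x (j.succAbove
                      ((⟨(i : ℕ), by omega⟩ : Fin (k + 1)).succAbove
                        (⟨(m : ℕ) - 1, by omega⟩ : Fin k))))
        else 0

theorem ceD_zero {k : ℕ} : ceD g (0 : AlternatingMap ℝ g ℝ (Fin k)) = 0 := by
  cases k with
  | zero => rfl
  | succ k => funext x; simp [ceD]

theorem ceD_add {k : ℕ} (α β : AlternatingMap ℝ g ℝ (Fin k)) :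
    ceD g (α + β) = ceD g α + ceD g β := by
  cases k with
  | zero => funext x; simp [ceD]
  | succ k =>
    funext x
    simp only [ceD, Pi.add_apply, AlternatingMap.add_apply]
    rw [← Finset.sum_add_distrib]
    refine Finset.sum_congr rfl fun i _ => ?_
    rw [← Finset.sum_add_distrib]
    refine Finset.sum_congr rfl fun j _ => ?_
    split
    · ring
    · ring

theorem ceD_smul {k : ℕ} (c : ℝ) (α : AlternatingMap ℝ g ℝ (Fin k)) :
    ceD g (c • α) = c • ceD g α := by
  cases k with
  | zero => funext x; simp [ceD]
  | succ k =>
    funext x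
    simp only [ceD, Pi.smul_apply, AlternatingMap.smul_apply, smul_eq_mul,
      Finset.mul_sum]
    refine Finset.sum_congr rfl fun i _ => ?_
    refine Finset.sum_congr rfl fun j _ => ?_
    split
    · ring
    · ring

/-- The space of `d`-closed `k`-forms. -/
def Zsub (k : ℕ) : Submodule ℝ (AlternatingMap ℝ g ℝ (Fin k)) where
  carrier := {α | ceD g α = 0}
  add_mem' := by
    intro a b ha hb
    simp only [Set.mem_setOf_eq] at *
    rw [ceD_add, ha, hb, add_zero]
  zero_mem' := by
    simpa only [Set.mem_setOf_eq] using ceD_zero g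
  smul_mem' := by
    intro c a ha
    simp only [Set.mem_setOf_eq] at *
    rw [ceD_smul, ha, smul_zero]

/-- The space of `d`-exact `k`-forms. -/
def Bsub : (k : ℕ) → Submodule ℝ (AlternatingMap ℝ g ℝ (Fin k))
  | 0 => ⊥
  | (k + 1) =>
    { carrier := {α | ∃ β : AlternatingMap ℝ g ℝ (Fin k), ceD g β = ⇑α}
      add_mem' := by
        rintro a b ⟨βa, hβa⟩ ⟨βb, hβb⟩
        exact ⟨βa + βb, by rw [ceD_add, hβa, hβb]; ext x; simp⟩
      zero_mem' := ⟨0, by rw [ceD_zero]; ext x; simp⟩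
      smul_mem' := by
        rintro c a ⟨β, hβ⟩
        exact ⟨c • β, by rw [ceD_smul, hβ]; rfl⟩ }

instance Zsub.instAddCommGroup (k : ℕ) : AddCommGroup ↥(Zsub g k) :=
  Submodule.addCommGroup (Zsub g k)

/-- The `k`-th Lie algebra cohomology `H^k(g;ℝ) = ker d / im d`. -/
abbrev Hcoh (k : ℕ) : Type _ :=
  ↥(Zsub g k) ⧸ (Bsub g k).comap (Zsub g k).subtype

/-- The cohomology class of a `d`-closed `k`-form. -/
def cls {k : ℕ} (α : AlternatingMap ℝ g ℝ (Fin k)) (hα : ceD g α = 0) : Hcoh g k :=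
  Submodule.Quotient.mk (⟨α, hα⟩ : Zsub g k)

/-- The subgroup `H^{k+}_K(g;ℝ)` of classes admitting a `d`-closed `K`-invariant
representative.  (The set of such classes is a linear subspace, so taking its span
does not enlarge it.) -/
def Hplus (K : g →ₗ[ℝ] g) (k : ℕ) : Submodule ℝ (Hcoh g k) :=
  Submodule.span ℝ
    {c | ∃ (α : AlternatingMap ℝ g ℝ (Fin k)) (hα : ceD g α = 0),
        α.compLinearMap K = α ∧ c = cls g α hα}

/-- The subgroup `H^{k−}_K(g;ℝ)` of classes admitting a `d`-closed
`K`-anti-invariant representative. -/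
def Hminus (K : g →ₗ[ℝ] g) (k : ℕ) : Submodule ℝ (Hcoh g k) :=
  Submodule.span ℝ
    {c | ∃ (α : AlternatingMap ℝ g ℝ (Fin k)) (hα : ceD g α = 0),
        α.compLinearMap K = -α ∧ c = cls g α hα}

/-- The wedge product of `k` linear functionals, as an alternating `k`-form. -/
def wedge {k : ℕ} (fs : Fin k → (g →ₗ[ℝ] ℝ)) :
    AlternatingMap ℝ g ℝ (Fin k) :=
  MultilinearMap.alternatization
    ((MultilinearMap.mkPiAlgebra ℝ (Fin k) ℝ).compLinearMap fs)

end ChevalleyEilenberg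

/-!
All brackets are multiples of `e₄`, so `e¹, e², e³` vanish on the derived algebra: their
pairwise wedges are closed, and so is `e³ ∧ e⁴`, while `d e⁴ = e¹ ∧ e³ + e³ ∧ e⁴`. Since `K` is
diagonal in the basis, it acts on `eⁱ ∧ eʲ` by the product of the two eigenvalues; hence
`e¹ ∧ e²`, `e³ ∧ e⁴` are invariant and `e² ∧ e³`, `e¹ ∧ e³` anti-invariant. Closedness of a
2-form kills its `e¹ ∧ e⁴` and `e² ∧ e⁴` components, and `[e¹ ∧ e³] = -[e³ ∧ e⁴]`, so
`[e¹ ∧ e²]`, `[e³ ∧ e⁴]`, `[e² ∧ e³]` span `H²`. The class `[e³ ∧ e⁴]` is then both invariant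
and anti-invariant, and it is nonzero because a primitive `β` would satisfy
`β(e₄) = dβ(e₁, e₃) = 0` and `β(e₄) = dβ(e₃, e₄) = 1`.
-/

section AlternatingTwo

variable {R M N : Type*} [CommRing R] [AddCommGroup M] [Module R M] [AddCommGroup N] [Module R N]

theorem AlternatingMap.neg_compLinearMap {ι M₂ : Type*} [AddCommGroup M₂] [Module R M₂]
    (f : M [⋀^ι]→ₗ[R] N) (K : M₂ →ₗ[R] M) : (-f).compLinearMap K = -f.compLinearMap K :=
  rfl

theorem AlternatingMap.map_two_swap (α : M [⋀^Fin 2]→ₗ[R] N) (u v : M) :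
    α ![v, u] = -α ![u, v] := by
  rw [← α.map_swap ![u, v] (show (0 : Fin 2) ≠ 1 by decide)]
  congr
  ext i
  fin_cases i <;> rfl

theorem AlternatingMap.map_two_neg_left (α : M [⋀^Fin 2]→ₗ[R] N) (u v : M) :
    α ![-u, v] = -α ![u, v] := by
  simpa using α.toMultilinearMap.cons_smul ![v] (-1) u

theorem AlternatingMap.map_two_zero_left (α : M [⋀^Fin 2]→ₗ[R] N) (v : M) : α ![0, v] = 0 := by
  simpa using α.toMultilinearMap.cons_smul ![v] 0 0

end AlternatingTwo

theorem Module.Basis.coord_comp_eq_smul {ι R M : Type*} [CommRing R] [AddCommGroup M]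
    [Module R M] (e : Module.Basis ι R M) {K : M →ₗ[R] M} {ε : ι → R}
    (hK : ∀ j, K (e j) = ε j • e j) (i : ι) : e.coord i ∘ₗ K = ε i • e.coord i := by
  classical
  refine e.ext fun j => ?_
  simp only [LinearMap.comp_apply, LinearMap.smul_apply, hK, map_smul, Module.Basis.coord_apply,
    Module.Basis.repr_self, Finsupp.single_apply, smul_eq_mul]
  split_ifs with h <;> simp [h]

theorem lie_mem_span_pair {R L : Type*} [CommRing R] [LieRing L] [LieAlgebra R L] {u v x y : L}
    (hx : x ∈ Submodule.span R {u, v}) (hy : y ∈ Submodule.span R {u, v}) :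
    ∃ c : R, ⁅x, y⁆ = c • ⁅u, v⁆ := by
  obtain ⟨a, b, rfl⟩ := Submodule.mem_span_pair.mp hx
  obtain ⟨c, d, rfl⟩ := Submodule.mem_span_pair.mp hy
  refine ⟨a * d - b * c, ?_⟩
  simp only [add_lie, lie_add, smul_lie, lie_smul, lie_self]
  rw [← lie_skew v u]
  module

section LowDegree

variable {g : Type*} [LieRing g] [LieAlgebra ℝ g]

theorem ceD_one_apply (α : AlternatingMap ℝ g ℝ (Fin 1)) (x : Fin 2 → g) :
    ceD g α x = -α ![⁅x 0, x 1⁆] := by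
  change ∑ i : Fin 2, ∑ j : Fin 2, _ = _
  simp only [Fin.sum_univ_two]
  norm_num
  congr
  ext m
  fin_cases m
  simp

theorem ceD_two_apply (α : AlternatingMap ℝ g ℝ (Fin 2)) (x : Fin 3 → g) :
    ceD g α x = -α ![⁅x 0, x 1⁆, x 2] + α ![⁅x 0, x 2⁆, x 1] - α ![⁅x 1, x 2⁆, x 0] := by
  change ∑ i : Fin 3, ∑ j : Fin 3, _ = _
  simp only [Fin.sum_univ_three]
  norm_num [Fin.succAbove]
  rw [sub_eq_add_neg]
  congr <;> funext m <;> fin_cases m <;> simp [Fin.lt_def]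

theorem wedge_one_apply (f : g →ₗ[ℝ] ℝ) (u : Fin 1 → g) : wedge g ![f] u = f (u 0) := by
  simp [wedge, MultilinearMap.alternatization_apply, Finset.univ_unique]

theorem wedge_two_apply (f h : g →ₗ[ℝ] ℝ) (u v : g) :
    wedge g ![f, h] ![u, v] = f u * h v - f v * h u := by
  rw [wedge, MultilinearMap.alternatization_apply,
    show (Finset.univ : Finset (Equiv.Perm (Fin 2))) = {1, Equiv.swap 0 1} by decide,
    Finset.sum_pair (by decide)]
  simp [Fin.prod_univ_two, sub_eq_add_neg]

theorem ceD_wedge_one_apply (f : g →ₗ[ℝ] ℝ) (x : Fin 2 → g) :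
    ceD g (wedge g ![f]) x = -f ⁅x 0, x 1⁆ := by
  rw [ceD_one_apply, wedge_one_apply]
  rfl

theorem ceD_wedge_two_apply (f h : g →ₗ[ℝ] ℝ) (x : Fin 3 → g) :
    ceD g (wedge g ![f, h]) x =
      f (x 2) * h ⁅x 0, x 1⁆ - f ⁅x 0, x 1⁆ * h (x 2)
      + f ⁅x 0, x 2⁆ * h (x 1) - f (x 1) * h ⁅x 0, x 2⁆
      + f (x 0) * h ⁅x 1, x 2⁆ - f ⁅x 1, x 2⁆ * h (x 0) := by
  rw [ceD_two_apply, wedge_two_apply, wedge_two_apply, wedge_two_apply]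
  ring

theorem ceD_wedge_two_eq_zero {f h : g →ₗ[ℝ] ℝ} (hf : ∀ x y : g, f ⁅x, y⁆ = 0)
    (hh : ∀ x y : g, h ⁅x, y⁆ = 0) : ceD g (wedge g ![f, h]) = 0 := by
  funext x
  simp [ceD_wedge_two_apply, hf, hh]

theorem wedge_two_compLinearMap {f h : g →ₗ[ℝ] ℝ} {K : g →ₗ[ℝ] g} {a b : ℝ}
    (hf : f ∘ₗ K = a • f) (hh : h ∘ₗ K = b • h) :
    (wedge g ![f, h]).compLinearMap K = (a * b) • wedge g ![f, h] := by
  refine AlternatingMap.ext fun u => ?_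
  obtain ⟨x, y, rfl⟩ : ∃ x y, u = ![x, y] := ⟨u 0, u 1, by ext i; fin_cases i <;> rfl⟩
  have hK : (fun i => K (![x, y] i)) = ![K x, K y] := by ext i; fin_cases i <;> rfl
  have hf' : ∀ z, f (K z) = a * f z := fun z => LinearMap.congr_fun hf z
  have hh' : ∀ z, h (K z) = b * h z := fun z => LinearMap.congr_fun hh z
  rw [AlternatingMap.compLinearMap_apply, AlternatingMap.smul_apply, hK, wedge_two_apply,
    wedge_two_apply, hf', hf', hh', hh', smul_eq_mul]
  ring

theorem alternatingMap_two_eq_sum_wedge {ι : Type*} [Fintype ι] [LinearOrder ι]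
    (e : Module.Basis ι ℝ g) (α : AlternatingMap ℝ g ℝ (Fin 2)) :
    α = ∑ i, ∑ j, if i < j then α ![e i, e j] • wedge g ![e.coord i, e.coord j] else 0 := by
  refine e.ext_alternating fun v hv => ?_
  obtain ⟨a, b, rfl⟩ : ∃ a b, v = ![a, b] := ⟨v 0, v 1, by ext i; fin_cases i <;> rfl⟩
  have hab : a ≠ b := fun h => absurd (hv (a₁ := 0) (a₂ := 1) (by simpa using h)) (by decide)
  have he : (fun i => e (![a, b] i)) = ![e a, e b] := by ext i; fin_cases i <;> rfl
  let ev : AlternatingMap ℝ g ℝ (Fin 2) →+ ℝ := ⟨⟨fun β => β ![e a, e b], rfl⟩, fun _ _ => rfl⟩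
  -- only the pair `(x, y)` equal to `(a, b)` or `(b, a)` contributes
  have term_eq : ∀ x y : ι, (if x < y then α ![e x, e y] *
      ((if a = x then 1 else 0) * (if b = y then 1 else 0) -
        (if b = x then 1 else 0) * (if a = y then 1 else 0)) else 0) =
      (if a = x then if b = y then (if a < b then α ![e a, e b] else 0) else 0 else 0) -
      (if b = x then if a = y then (if b < a then α ![e b, e a] else 0) else 0 else 0) := by
    intro x y
    split_ifs <;> subst_vars <;> simp_all
  rw [he]
  change ev α = ev (∑ i, ∑ j, _)
  simp only [map_sum, apply_ite ev, map_zero]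
  simp only [ev, AddMonoidHom.coe_mk, ZeroHom.coe_mk, AlternatingMap.smul_apply, wedge_two_apply,
    Module.Basis.coord_apply, Module.Basis.repr_self, Finsupp.single_apply, smul_eq_mul, term_eq,
    Finset.sum_sub_distrib]
  rcases hab.lt_or_gt with h | h
  · simp [h, h.not_gt]
  · simp [h, h.not_gt, α.map_two_swap (e b)]

theorem cls_eq_zero_iff {k : ℕ} {α : AlternatingMap ℝ g ℝ (Fin (k + 1))} (hα : ceD g α = 0) :
    cls g α hα = 0 ↔ ∃ β : AlternatingMap ℝ g ℝ (Fin k), ceD g β = ⇑α := by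
  rw [cls, Submodule.Quotient.mk_eq_zero, Submodule.mem_comap]
  rfl

theorem cls_eq_cls {k : ℕ} {α α' : AlternatingMap ℝ g ℝ (Fin (k + 1))} (hα : ceD g α = 0)
    (hα' : ceD g α' = 0) (β : AlternatingMap ℝ g ℝ (Fin k)) (hβ : ceD g β = ⇑(α - α')) :
    cls g α hα = cls g α' hα' := by
  rw [cls, cls, Submodule.Quotient.eq, Submodule.mem_comap]
  exact ⟨β, hβ⟩

end LowDegree

noncomputable section

section Stmt15

variable (g : Type*) [LieRing g] [LieAlgebra ℝ g] (e : Module.Basis (Fin 4) ℝ g)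

/-- `g⁺ = span(e_1, e_2)` (0-indexed: `e 0, e 1`). -/
def gP : Submodule ℝ g := Submodule.span ℝ {e 0, e 1}

/-- `g⁻ = span(e_3, e_4)` (0-indexed: `e 2, e 3`). -/
def gM : Submodule ℝ g := Submodule.span ℝ {e 2, e 3}

namespace DComplexExample

theorem isCompl_gP_gM : IsCompl (gP g e) (gM g e) := by
  have hst : IsCompl ({0, 1} : Set (Fin 4)) {2, 3} := by
    rw [show ({2, 3} : Set (Fin 4)) = {0, 1}ᶜ by ext i; fin_cases i <;> simp]
    exact isCompl_compl
  have := e.linearIndependent.isCompl_span_image (by rw [e.span_eq]) hst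
  rwa [Set.image_pair, Set.image_pair] at this

variable {g e}

theorem apply_basis_eq_smul {K : g →ₗ[ℝ] g} (hKp : ∀ x ∈ gP g e, K x = x)
    (hKq : ∀ x ∈ gM g e, K x = -x) (j : Fin 4) :
    K (e j) = (![1, 1, -1, -1] : Fin 4 → ℝ) j • e j := by
  fin_cases j
  · simpa using hKp (e 0) (Submodule.subset_span (by simp))
  · simpa using hKp (e 1) (Submodule.subset_span (by simp))
  · simpa using hKq (e 2) (Submodule.subset_span (by simp))
  · simpa using hKq (e 3) (Submodule.subset_span (by simp))

theorem wedge_coord_compLinearMap {K : g →ₗ[ℝ] g} (hKp : ∀ x ∈ gP g e, K x = x)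
    (hKq : ∀ x ∈ gM g e, K x = -x) (a b : Fin 4) :
    (wedge g ![e.coord a, e.coord b]).compLinearMap K =
      ((![1, 1, -1, -1] : Fin 4 → ℝ) a * ![1, 1, -1, -1] b) • wedge g ![e.coord a, e.coord b] :=
  have hε := e.coord_comp_eq_smul (apply_basis_eq_smul hKp hKq)
  wedge_two_compLinearMap (hε a) (hε b)

section Bracket

variable (hbr : ∀ i j : Fin 4, i < j → ⁅e i, e j⁆ =
      (if i = 0 ∧ j = 2 then -e 3 else if i = 2 ∧ j = 3 then -e 3 else 0))
include hbr

theorem lie_basis (i j : Fin 4) : ⁅e i, e j⁆ =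
    if i = 0 ∧ j = 2 then -e 3 else if i = 2 ∧ j = 0 then e 3
    else if i = 2 ∧ j = 3 then -e 3 else if i = 3 ∧ j = 2 then e 3 else 0 := by
  rcases lt_trichotomy i j with h | rfl | h
  · rw [hbr i j h]; fin_cases i <;> fin_cases j <;> simp_all
  · rw [lie_self]; fin_cases i <;> simp
  · rw [← lie_skew, hbr j i h]; fin_cases i <;> fin_cases j <;> simp_all

theorem lie_eq_smul_basis_three (x y : g) :
    ⁅x, y⁆ = (e.coord 2 x * e.coord 0 y - e.coord 0 x * e.coord 2 y +
      e.coord 3 x * e.coord 2 y - e.coord 2 x * e.coord 3 y) • e 3 := by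
  conv_lhs => rw [← e.sum_repr x, ← e.sum_repr y]
  simp only [Fin.sum_univ_four, add_lie, lie_add, smul_lie, lie_smul, lie_basis hbr,
    Module.Basis.coord_apply]
  simp +decide only [if_true, if_false]
  module

theorem coord_lie_of_ne_three {a : Fin 4} (ha : a ≠ 3) (x y : g) : e.coord a ⁅x, y⁆ = 0 := by
  simp [lie_eq_smul_basis_three hbr, ha.symm]

theorem coord_three_lie (x y : g) : e.coord 3 ⁅x, y⁆ =
    e.coord 2 x * e.coord 0 y - e.coord 0 x * e.coord 2 y +
      e.coord 3 x * e.coord 2 y - e.coord 2 x * e.coord 3 y := by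
  simp [lie_eq_smul_basis_three hbr]

theorem trace_ad_basis_two : LinearMap.trace ℝ g (LieAlgebra.ad ℝ g (e 2)) = -1 := by
  rw [LinearMap.trace_eq_matrix_trace ℝ e, Matrix.trace, Fin.sum_univ_four]
  simp [LinearMap.toMatrix_apply, lie_basis hbr]

theorem lie_gP_eq_zero : ∀ x ∈ gP g e, ∀ y ∈ gP g e, ⁅x, y⁆ = (0 : g) := by
  intro x hx y hy
  obtain ⟨c, hc⟩ := lie_mem_span_pair hx hy
  simp [hc, lie_basis hbr]

theorem lie_mem_gM : ∀ x ∈ gM g e, ∀ y ∈ gM g e, ⁅x, y⁆ ∈ gM g e := by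
  intro x hx y hy
  obtain ⟨c, hc⟩ := lie_mem_span_pair hx hy
  rw [hc, hbr 2 3 (by decide)]
  exact (gM g e).smul_mem c ((gM g e).neg_mem (Submodule.subset_span (by simp)))

theorem not_lie_gM_eq_zero : ¬ ∀ x ∈ gM g e, ∀ y ∈ gM g e, ⁅x, y⁆ = (0 : g) := by
  intro h
  have := h (e 2) (Submodule.subset_span (by simp)) (e 3) (Submodule.subset_span (by simp))
  simp [hbr 2 3 (by decide), e.ne_zero] at this

theorem ceD_wedge_coord_eq_zero (a b : Fin 4) (ha : a ≠ 3 := by decide)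
    (hb : b ≠ 3 := by decide) : ceD g (wedge g ![e.coord a, e.coord b]) = 0 :=
  ceD_wedge_two_eq_zero (coord_lie_of_ne_three hbr ha) (coord_lie_of_ne_three hbr hb)

theorem ceD_wedge_coord_two_three : ceD g (wedge g ![e.coord 2, e.coord 3]) = 0 := by
  funext x
  rw [ceD_wedge_two_apply, Pi.zero_apply]
  simp only [coord_lie_of_ne_three hbr (show (2 : Fin 4) ≠ 3 by decide), coord_three_lie hbr]
  ring

theorem ceD_wedge_coord_three : ceD g (wedge g ![e.coord 3]) =
    ⇑(wedge g ![e.coord 0, e.coord 2] + wedge g ![e.coord 2, e.coord 3]) := by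
  funext x
  obtain ⟨u, v, rfl⟩ : ∃ u v, x = ![u, v] := ⟨x 0, x 1, by ext i; fin_cases i <;> rfl⟩
  rw [ceD_wedge_one_apply, AlternatingMap.add_apply, wedge_two_apply, wedge_two_apply]
  simp only [Matrix.cons_val_zero, Matrix.cons_val_one, coord_three_lie hbr]
  ring

theorem cls_wedge_coord_two_three_ne_zero (h : ceD g (wedge g ![e.coord 2, e.coord 3]) = 0) :
    cls g (wedge g ![e.coord 2, e.coord 3]) h ≠ 0 := by
  rw [Ne, cls_eq_zero_iff]
  rintro ⟨β, hβ⟩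
  have h02 := congrFun hβ ![e 0, e 2]
  have h23 := congrFun hβ ![e 2, e 3]
  simp [ceD_one_apply, hbr 0 2 (by decide), hbr 2 3 (by decide), wedge_two_apply] at h02 h23
  simp [h02] at h23

theorem eq_of_ceD_eq_zero {α : AlternatingMap ℝ g ℝ (Fin 2)} (hα : ceD g α = 0) :
    α = α ![e 0, e 1] • wedge g ![e.coord 0, e.coord 1] +
      α ![e 0, e 2] • wedge g ![e.coord 0, e.coord 2] +
      α ![e 1, e 2] • wedge g ![e.coord 1, e.coord 2] +
      α ![e 2, e 3] • wedge g ![e.coord 2, e.coord 3] := by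
  have h03 : α ![e 0, e 3] = 0 := by
    have h := congrFun hα ![e 0, e 2, e 3]
    simp [ceD_two_apply, hbr 0 2 (by decide), hbr 0 3 (by decide), hbr 2 3 (by decide),
      α.map_two_neg_left, α.map_two_zero_left] at h
    linarith [α.map_two_swap (e 3) (e 3), α.map_two_swap (e 0) (e 3)]
  have h13 : α ![e 1, e 3] = 0 := by
    have h := congrFun hα ![e 1, e 2, e 3]
    simp [ceD_two_apply, hbr 1 2 (by decide), hbr 1 3 (by decide), hbr 2 3 (by decide),
      α.map_two_neg_left, α.map_two_zero_left] at h
    linarith [α.map_two_swap (e 1) (e 3)]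
  have hdec := alternatingMap_two_eq_sum_wedge e α
  simpa +decide only [Fin.sum_univ_four, if_true, if_false, h03, h13, zero_smul, add_zero,
    zero_add] using hdec

theorem span_cls_eq_top (h01 : ceD g (wedge g ![e.coord 0, e.coord 1]) = 0)
    (h23 : ceD g (wedge g ![e.coord 2, e.coord 3]) = 0)
    (h12 : ceD g (wedge g ![e.coord 1, e.coord 2]) = 0) :
    Submodule.span ℝ {cls g (wedge g ![e.coord 0, e.coord 1]) h01,
      cls g (wedge g ![e.coord 2, e.coord 3]) h23,
      cls g (wedge g ![e.coord 1, e.coord 2]) h12} = ⊤ := by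
  rw [eq_top_iff]
  rintro _ -
  obtain ⟨⟨α, hα⟩, rfl⟩ := Submodule.Quotient.mk_surjective _ ‹Hcoh g 2›
  have hsum : ceD g (wedge g ![e.coord 0, e.coord 2] + wedge g ![e.coord 2, e.coord 3]) = 0 :=
    (Zsub g 2).add_mem (ceD_wedge_coord_eq_zero hbr 0 2) h23
  have hexact : cls g _ hsum = 0 := (cls_eq_zero_iff hsum).mpr ⟨_, ceD_wedge_coord_three hbr⟩
  have hcomb : (⟨α, hα⟩ : Zsub g 2) =
      α ![e 0, e 1] • ⟨_, h01⟩ + (α ![e 2, e 3] - α ![e 0, e 2]) • ⟨_, h23⟩ +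
        α ![e 1, e 2] • ⟨_, h12⟩ + α ![e 0, e 2] • ⟨_, hsum⟩ := by
    ext1
    simp only [Submodule.coe_add, Submodule.coe_smul]
    nth_rewrite 1 [eq_of_ceD_eq_zero hbr hα]
    module
  rw [hcomb]
  simp only [Submodule.Quotient.mk_add, Submodule.Quotient.mk_smul]
  refine add_mem (add_mem (add_mem ?_ ?_) ?_) ?_
  · exact Submodule.smul_mem _ _ (Submodule.subset_span (Set.mem_insert _ _))
  · exact Submodule.smul_mem _ _ (Submodule.subset_span (Set.mem_insert_of_mem _
      (Set.mem_insert _ _)))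
  · exact Submodule.smul_mem _ _ (Submodule.subset_span (Set.mem_insert_of_mem _
      (Set.mem_insert_of_mem _ rfl)))
  · rw [show Submodule.Quotient.mk ⟨_, hsum⟩ = (0 : Hcoh g 2) from hexact, smul_zero]
    exact zero_mem _

end Bracket

end DComplexExample

open DComplexExample

/-- On the (non-unimodular) 4-dimensional solvable Lie algebra
with `[e_1,e_3] = −e_4`, `[e_3,e_4] = −e_4`, the non-Abelian D-complex structure
with `g⁺ = span(e_1,e_2)`, `g⁻ = span(e_3,e_4)` is linear C∞-full but not linear
C∞-pure at the 2nd stage: `0 ≠ [e^3∧e^4] ∈ H^{2+}_K ∩ H^{2−}_K` since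
`e^3∧e^4 − d e^4 = −e^1∧e^3`. -/
theorem non_unimodular_full_not_pure
    (hbr : ∀ i j : Fin 4, i < j → ⁅e i, e j⁆ =
      (if i = 0 ∧ j = 2 then -e 3 else if i = 2 ∧ j = 3 then -e 3 else 0))
    (K : g →ₗ[ℝ] g)
    (hKp : ∀ x ∈ gP g e, K x = x) (hKq : ∀ x ∈ gM g e, K x = -x) :
    LinearMap.trace ℝ g (LieAlgebra.ad ℝ g (e 2)) = -1 ∧
    ¬ (∀ x : g, LinearMap.trace ℝ g (LieAlgebra.ad ℝ g x) = 0) ∧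
    IsCompl (gP g e) (gM g e) ∧
    (∀ x ∈ gP g e, ∀ y ∈ gP g e, ⁅x, y⁆ = (0 : g)) ∧
    (∀ x ∈ gM g e, ∀ y ∈ gM g e, ⁅x, y⁆ ∈ gM g e) ∧
    ¬ (∀ x ∈ gM g e, ∀ y ∈ gM g e, ⁅x, y⁆ = (0 : g)) ∧
    Hplus g K 2 ⊔ Hminus g K 2 = ⊤ ∧
    (∃ (h12 : ceD g (wedge g ![e.coord 0, e.coord 1]) = 0)
       (h34 : ceD g (wedge g ![e.coord 2, e.coord 3]) = 0)
       (h23 : ceD g (wedge g ![e.coord 1, e.coord 2]) = 0),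
      cls g (wedge g ![e.coord 0, e.coord 1]) h12 ∈ Hplus g K 2 ∧
      cls g (wedge g ![e.coord 2, e.coord 3]) h34 ∈ Hplus g K 2 ∧
      cls g (wedge g ![e.coord 1, e.coord 2]) h23 ∈ Hminus g K 2 ∧
      Submodule.span ℝ
        {cls g (wedge g ![e.coord 0, e.coord 1]) h12,
         cls g (wedge g ![e.coord 2, e.coord 3]) h34,
         cls g (wedge g ![e.coord 1, e.coord 2]) h23} =
        (⊤ : Submodule ℝ (Hcoh g 2))) ∧
    ceD g (wedge g ![e.coord 3]) =
      ⇑(wedge g ![e.coord 0, e.coord 2] + wedge g ![e.coord 2, e.coord 3]) ∧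
    (∃ (h34 : ceD g (wedge g ![e.coord 2, e.coord 3]) = 0)
       (h13 : ceD g (-(wedge g ![e.coord 0, e.coord 2])) = 0),
      cls g (wedge g ![e.coord 2, e.coord 3]) h34 =
        cls g (-(wedge g ![e.coord 0, e.coord 2])) h13 ∧
      cls g (wedge g ![e.coord 2, e.coord 3]) h34 ≠ 0 ∧
      cls g (wedge g ![e.coord 2, e.coord 3]) h34 ∈
        Hplus g K 2 ⊓ Hminus g K 2) := by
  have h01 := ceD_wedge_coord_eq_zero hbr 0 1
  have h12 := ceD_wedge_coord_eq_zero hbr 1 2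
  have h02 := ceD_wedge_coord_eq_zero hbr 0 2
  have h23 := ceD_wedge_coord_two_three hbr
  have h02' : ceD g (-wedge g ![e.coord 0, e.coord 2]) = 0 := (Zsub g 2).neg_mem h02
  have hK := wedge_coord_compLinearMap hKp hKq
  have inv01 : cls g _ h01 ∈ Hplus g K 2 :=
    Submodule.subset_span ⟨_, h01, by rw [hK]; simp, rfl⟩
  have inv23 : cls g _ h23 ∈ Hplus g K 2 :=
    Submodule.subset_span ⟨_, h23, by rw [hK]; simp, rfl⟩
  have anti12 : cls g _ h12 ∈ Hminus g K 2 :=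
    Submodule.subset_span ⟨_, h12, by rw [hK]; simp only [Matrix.cons_val]; module, rfl⟩
  have anti02 : cls g _ h02' ∈ Hminus g K 2 :=
    Submodule.subset_span ⟨_, h02', by
      rw [AlternatingMap.neg_compLinearMap, hK]; simp only [Matrix.cons_val]; module, rfl⟩
  have heq : cls g _ h23 = cls g _ h02' := by
    refine cls_eq_cls h23 h02' (wedge g ![e.coord 3]) ?_
    rw [ceD_wedge_coord_three hbr, sub_neg_eq_add]
    exact congrArg _ (add_comm _ _)
  have hspan := span_cls_eq_top hbr h01 h23 h12
  refine ⟨trace_ad_basis_two hbr, fun h => by simpa [trace_ad_basis_two hbr] using h (e 2),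
    isCompl_gP_gM g e, lie_gP_eq_zero hbr, lie_mem_gM hbr, not_lie_gM_eq_zero hbr, ?_,
    ⟨h01, h23, h12, inv01, inv23, anti12, hspan⟩, ceD_wedge_coord_three hbr,
    ⟨h23, h02', heq, cls_wedge_coord_two_three_ne_zero hbr h23, inv23, heq ▸ anti02⟩⟩
  rw [eq_top_iff, ← hspan, Submodule.span_le]
  rintro _ (rfl | rfl | rfl)
  exacts [Submodule.mem_sup_left inv01, Submodule.mem_sup_left inv23,
    Submodule.mem_sup_right anti12]

end Stmt15

end
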